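/- arXiv:2207.06178 — 3 statements merged into one kernel-verified Lean document; each statement's English description precedes it below -/
import Mathlib

section
/- Let R = ℤ[q,q⁻¹] and let 𝔄 be an associative R-algebra with an R-basis 𝔹 whose structure constants all lie in ℕ[q,q⁻¹]. Define b' ←_L b if there exists c ∈ 𝔹 such that the coefficient of b' in the expansion of cb in the basis 𝔹 is nonzero, and let ⪯_L be the transitive closure of ←_L. Then for b', b'' ∈ 𝔹, one has b' ⪯_L b'' if and only if there exists a single element β ∈ 𝔹 such that the coefficient of b' in the basis expansion of β·b'' is nonzero. -/
open LaurentPolynomial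

/-- A Laurent polynomial has nonnegative coefficients. -/
private def NN (f : LaurentPolynomial ℤ) : Prop := ∀ n : ℤ, 0 ≤ f.coeff n

private lemma NN.mul {f g : LaurentPolynomial ℤ} (hf : NN f) (hg : NN g) : NN (f * g) := by
  intro n
  rw [AddMonoidAlgebra.coeff_mul, Finsupp.sum]
  refine Finset.sum_nonneg fun a₁ _ => ?_
  rw [Finsupp.sum]
  refine Finset.sum_nonneg fun a₂ _ => ?_
  split
  · exact mul_nonneg (hf a₁) (hg a₂)
  · exact le_refl 0

private lemma NN.exists_pos {f : LaurentPolynomial ℤ} (hf : NN f) (h0 : f ≠ 0) :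
    ∃ n : ℤ, 0 < f.coeff n := by
  obtain ⟨n, hn⟩ : ∃ n, f.coeff n ≠ 0 := by
    by_contra h
    push_neg at h
    exact h0 (AddMonoidAlgebra.coeff_eq_zero.mp (Finsupp.ext h))
  exact ⟨n, lt_of_le_of_ne (hf n) (Ne.symm hn)⟩

/-- Expansion of a product coefficient along the basis expansion of the left factor. -/
private lemma expand_left {𝔄 : Type*} {B : Type*} [NonUnitalSemiring 𝔄]
    [Module (LaurentPolynomial ℤ) 𝔄]
    [SMulCommClass (LaurentPolynomial ℤ) 𝔄 𝔄] [IsScalarTower (LaurentPolynomial ℤ) 𝔄 𝔄]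
    (b : Module.Basis B (LaurentPolynomial ℤ) 𝔄) (x y : 𝔄) (b' : B) :
    b.repr (x * y) b' = (b.repr x).sum fun i r => r * b.repr (b i * y) b' := by
  conv_lhs => rw [← b.linearCombination_repr x]
  rw [Finsupp.linearCombination_apply, Finsupp.sum_mul, map_finsuppSum, Finsupp.sum_apply]
  refine Finsupp.sum_congr fun i _ => ?_
  rw [smul_mul_assoc, map_smul, Finsupp.smul_apply, smul_eq_mul]

/-- Expansion of a product coefficient along the basis expansion of the right factor. -/
private lemma expand_right {𝔄 : Type*} {B : Type*} [NonUnitalSemiring 𝔄]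
    [Module (LaurentPolynomial ℤ) 𝔄]
    [SMulCommClass (LaurentPolynomial ℤ) 𝔄 𝔄] [IsScalarTower (LaurentPolynomial ℤ) 𝔄 𝔄]
    (b : Module.Basis B (LaurentPolynomial ℤ) 𝔄) (x y : 𝔄) (b' : B) :
    b.repr (x * y) b' = (b.repr y).sum fun i r => r * b.repr (x * b i) b' := by
  conv_lhs => rw [← b.linearCombination_repr y]
  rw [Finsupp.linearCombination_apply, Finsupp.mul_sum, map_finsuppSum, Finsupp.sum_apply]
  refine Finsupp.sum_congr fun i _ => ?_
  rw [mul_smul_comm, map_smul, Finsupp.smul_apply, smul_eq_mul]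

/-- Key step: if `b'` appears in `u * m` and `m` appears in `v * w`, then `b'` appears in
`γ * w` for some single basis element `γ`. -/
private lemma key_step {𝔄 : Type*} {B : Type*} [NonUnitalSemiring 𝔄]
    [Module (LaurentPolynomial ℤ) 𝔄]
    [SMulCommClass (LaurentPolynomial ℤ) 𝔄 𝔄] [IsScalarTower (LaurentPolynomial ℤ) 𝔄 𝔄]
    (b : Module.Basis B (LaurentPolynomial ℤ) 𝔄)
    (hpos : ∀ x y c : B, ∀ n : ℤ, 0 ≤ (b.repr (b x * b y) c).coeff n)
    {u m v w b' : B} (h₁ : b.repr (b u * b m) b' ≠ 0) (h₂ : b.repr (b v * b w) m ≠ 0) :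
    ∃ γ : B, b.repr (b γ * b w) b' ≠ 0 := by
  -- First show the big coefficient is nonzero
  have hbig : b.repr (b u * (b v * b w)) b' ≠ 0 := by
    rw [expand_right b (b u) (b v * b w) b']
    -- each summand has nonneg coefficients; the summand at `m` is nonzero
    have hterm : NN (b.repr (b v * b w) m * b.repr (b u * b m) b') :=
      NN.mul (hpos v w m) (hpos u m b')
    have htne : b.repr (b v * b w) m * b.repr (b u * b m) b' ≠ 0 :=
      mul_ne_zero h₂ h₁
    obtain ⟨n, hn⟩ := hterm.exists_pos htne
    intro hzero
    have hpos' : 0 < ((b.repr (b v * b w)).sum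
        (fun i r => r * b.repr (b u * b i) b')).coeff n := by
      rw [Finsupp.sum, AddMonoidAlgebra.coeff_sum, Finsupp.finset_sum_apply]
      refine Finset.sum_pos' (fun i _ => NN.mul (hpos v w i) (hpos u i b') n) ?_
      exact ⟨m, Finsupp.mem_support_iff.mpr h₂, hn⟩
    rw [hzero] at hpos'
    simp at hpos'
  -- Now reassociate and expand on the left
  rw [← mul_assoc, expand_left b (b u * b v) (b w) b'] at hbig
  by_contra hcon
  push_neg at hcon
  exact hbig (Finset.sum_eq_zero fun i _ => by simp only []; rw [hcon i, mul_zero])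

/-- For an associative `ℤ[q,q⁻¹]`-algebra `𝔄` with basis `𝔹` whose structure
constants lie in `ℕ[q,q⁻¹]` (all coefficients nonnegative), the transitive closure of the
elementary left relation collapses to a single step: `b' ⪯_L b''` iff there is a single basis
element `β` such that the coefficient of `b'` in `β * b''` is nonzero. -/
theorem stmt0 {𝔄 : Type*} {B : Type*} [NonUnitalSemiring 𝔄]
    [Module (LaurentPolynomial ℤ) 𝔄]
    [SMulCommClass (LaurentPolynomial ℤ) 𝔄 𝔄] [IsScalarTower (LaurentPolynomial ℤ) 𝔄 𝔄]
    (b : Module.Basis B (LaurentPolynomial ℤ) 𝔄)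
    -- structure constants lie in ℕ[q,q⁻¹]:
    (hpos : ∀ x y c : B, ∀ n : ℤ, 0 ≤ (b.repr (b x * b y) c).coeff n)
    (b' b'' : B) :
    Relation.TransGen (fun b₂ b₁ : B => ∃ c : B, b.repr (b c * b b₁) b₂ ≠ 0) b' b'' ↔
      ∃ β : B, b.repr (b β * b b'') b' ≠ 0 := by
  constructor
  · intro h
    induction h with
    | single h => exact h
    | tail _ hr ih =>
      obtain ⟨β, hβ⟩ := ih
      obtain ⟨c, hc⟩ := hr
      exact key_step b hpos hβ hc
  · intro h
    exact Relation.TransGen.single h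
end

section
/- Let Λ and Λ' be two symbols of type B_d (possibly with different values of m). If the partitions par(Λ) and par(Λ') of 2d+1 are equal (after removing zero parts), then Λ and Λ' are equivalent under the shift relation; in other words, the map [Λ] ↦ par[Λ] from equivalence classes of symbols to partitions of 2d+1 is injective. -/
/-- The multiset `{2λᵢ+1 : λᵢ ∈ A} ∪ {2μⱼ : μⱼ ∈ B}` attached to a symbol with rows `A`, `B`. -/
def symMS (A B : Finset ℕ) : Multiset ℕ :=
  A.val.map (fun a => 2 * a + 1) + B.val.map (fun b => 2 * b)

/-- The partition `par(Λ)` of a symbol with rows `A`, `B`: sort `{2λᵢ+1} ∪ {2μⱼ}`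
increasingly as `ν₁ < ν₂ < ⋯` and take the parts `νₖ − (k−1)`, as a multiset. -/
def parB (A B : Finset ℕ) : Multiset ℕ :=
  let L := (symMS A B).sort (· ≤ ·)
  (List.zipWith (fun a b => a - b) L (List.range L.length) : List ℕ)

/-- `(A, B)` is a symbol of type `B_d`: strictly increasing rows (encoded as finsets)
`λ₁ < ⋯ < λ_{m+1}` and `μ₁ < ⋯ < μ_m` with `Σλᵢ + Σμⱼ = d + m²`. -/
def IsSymbolB (d : ℕ) (A B : Finset ℕ) : Prop :=
  A.card = B.card + 1 ∧ A.sum id + B.sum id = d + B.card ^ 2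

/-- One shift step: prepend `0` to each row and add `1` to every entry. -/
def ShiftB (S S' : Finset ℕ × Finset ℕ) : Prop :=
  S'.1 = insert 0 (S.1.image (· + 1)) ∧ S'.2 = insert 0 (S.2.image (· + 1))

/- ############ auxiliary development ############ -/

/-- The list of parts before coercion to a multiset. -/
def parL (A B : Finset ℕ) : List ℕ :=
  let L := (symMS A B).sort (· ≤ ·)
  List.zipWith (fun a b => a - b) L (List.range L.length)

lemma parB_eq_parL (A B : Finset ℕ) : parB A B = (parL A B : Multiset ℕ) := rfl

lemma symMS_nodup (A B : Finset ℕ) : (symMS A B).Nodup := by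
  unfold symMS
  rw [Multiset.nodup_add]
  refine ⟨A.nodup.map (fun a b hab => by omega), B.nodup.map (fun a b hab => by omega), ?_⟩
  rw [Multiset.disjoint_left]
  intro x hx hx'
  simp only [Multiset.mem_map] at hx hx'
  obtain ⟨a, _, ha⟩ := hx
  obtain ⟨b, _, hb⟩ := hx'
  omega

lemma sort_strict (A B : Finset ℕ) :
    ((symMS A B).sort (· ≤ ·)).Pairwise (· < ·) := by
  have h1 := Multiset.pairwise_sort (symMS A B) (· ≤ ·)
  have h2 : ((symMS A B).sort (· ≤ ·)).Nodup := by
    have := symMS_nodup A B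
    rwa [← Multiset.sort_eq (symMS A B) (· ≤ ·), Multiset.coe_nodup] at this
  exact (h1.and h2).imp (fun h => lt_of_le_of_ne h.1 h.2)

lemma le_get_of_sorted (L : List ℕ) (h : L.Pairwise (· < ·)) :
    ∀ i (hi : i < L.length), i ≤ L.get ⟨i, hi⟩ := by
  intro i
  induction i with
  | zero => intro _; exact Nat.zero_le _
  | succ n ih =>
    intro hi
    have h1 : n < L.length := by omega
    have h2 := (List.Pairwise.sortedLT h).strictMono_get (show (⟨n, h1⟩ : Fin L.length) < ⟨n + 1, hi⟩ by
      simp [Fin.lt_def])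
    have h3 := ih h1
    omega

lemma parL_length (A B : Finset ℕ) :
    (parL A B).length = ((symMS A B).sort (· ≤ ·)).length := by
  simp [parL]

lemma parL_get (A B : Finset ℕ) (i : ℕ) (hi : i < (parL A B).length) :
    (parL A B)[i] =
      ((symMS A B).sort (· ≤ ·))[i]'(by rw [← parL_length]; exact hi) - i := by
  have hi' : i < ((symMS A B).sort (· ≤ ·)).length := by rw [← parL_length]; exact hi
  unfold parL
  simp [List.getElem_zipWith, List.getElem_range]

lemma parL_sorted (A B : Finset ℕ) : (parL A B).Pairwise (· ≤ ·) := by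
  have hs := sort_strict A B
  rw [← List.isChain_iff_pairwise, List.isChain_iff_getElem]
  intro i hi
  have hi1 : i < (parL A B).length := by omega
  have hi2 : i + 1 < (parL A B).length := by omega
  have hL1 : i < ((symMS A B).sort (· ≤ ·)).length := by rw [← parL_length]; exact hi1
  have hL2 : i + 1 < ((symMS A B).sort (· ≤ ·)).length := by rw [← parL_length]; exact hi2
  have hlt := (List.Pairwise.sortedLT hs).strictMono_get
    (show (⟨i, hL1⟩ : Fin _) < ⟨i + 1, hL2⟩ by simp [Fin.lt_def])
  have hle := le_get_of_sorted _ hs i hL1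
  simp only [List.get_eq_getElem, parL_get] at *
  omega

lemma symMS_card (A B : Finset ℕ) :
    Multiset.card (symMS A B) = A.card + B.card := by
  unfold symMS
  rw [Multiset.card_add, Multiset.card_map, Multiset.card_map]
  rfl

/-- Recover the sorted symbol multiset from the partition list. -/
lemma parL_inj (A B A' B' : Finset ℕ) (hlen : A.card + B.card = A'.card + B'.card)
    (hp : parL A B = parL A' B') : symMS A B = symMS A' B' := by
  have hlen2 : ((symMS A B).sort (· ≤ ·)).length = ((symMS A' B').sort (· ≤ ·)).length := by
    rw [Multiset.length_sort, Multiset.length_sort, symMS_card, symMS_card, hlen]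
  have hLL : (symMS A B).sort (· ≤ ·) = (symMS A' B').sort (· ≤ ·) := by
    apply List.ext_get hlen2
    intro n h1 h2
    have hp1 : n < (parL A B).length := by rw [parL_length]; exact h1
    have hp2 : n < (parL A' B').length := by rw [parL_length]; exact h2
    have e1 := parL_get A B n hp1
    have e2 := parL_get A' B' n hp2
    have e3 : (parL A B)[n] = (parL A' B')[n] := List.getElem_of_eq hp hp1
    have l1 := le_get_of_sorted _ (sort_strict A B) n h1
    have l2 := le_get_of_sorted _ (sort_strict A' B') n h2
    simp only [List.get_eq_getElem] at *
    omega
  calc symMS A B = (((symMS A B).sort (· ≤ ·) : List ℕ) : Multiset ℕ) :=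
        (Multiset.sort_eq _ _).symm
    _ = (((symMS A' B').sort (· ≤ ·) : List ℕ) : Multiset ℕ) := by rw [hLL]
    _ = symMS A' B' := Multiset.sort_eq _ _

lemma sorted_eq_replicate (p : List ℕ) (hp : p.Pairwise (· ≤ ·)) :
    p = List.replicate (p.length - (p.filter (· ≠ 0)).length) 0 ++ p.filter (· ≠ 0) := by
  induction p with
  | nil => simp
  | cons a t ih =>
    rw [List.pairwise_cons] at hp
    by_cases ha : a = 0
    · subst ha
      have hf : (0 :: t).filter (· ≠ 0) = t.filter (· ≠ 0) := by simp
      have hle : (t.filter (· ≠ 0)).length ≤ t.length := (List.filter_sublist (l := t)).length_le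
      rw [hf]
      have he : (0 :: t).length - (t.filter (· ≠ 0)).length
          = (t.length - (t.filter (· ≠ 0)).length) + 1 := by
        simp only [List.length_cons]; omega
      rw [he, List.replicate_succ, List.cons_append]
      exact congrArg _ (ih hp.2)
    · have hf : (a :: t).filter (· ≠ 0) = a :: t := by
        rw [List.filter_eq_self]
        intro x hx
        rcases List.mem_cons.1 hx with rfl | hx
        · simpa using ha
        · have := hp.1 x hx
          simp only [ne_eq, decide_eq_true_eq]
          omega
      rw [hf]
      simp

lemma sorted_filter_inj (p p' : List ℕ) (hs : p.Pairwise (· ≤ ·)) (hs' : p'.Pairwise (· ≤ ·))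
    (hlen : p.length = p'.length)
    (hf : p.filter (· ≠ 0) = p'.filter (· ≠ 0)) : p = p' := by
  rw [sorted_eq_replicate p hs, sorted_eq_replicate p' hs', hf, hlen]

lemma symMS_inj (A B A' B' : Finset ℕ) (h : symMS A B = symMS A' B') :
    A = A' ∧ B = B' := by
  have hodd : ∀ (X Y : Finset ℕ),
      (symMS X Y).filter (fun n => n % 2 = 1) = X.val.map (fun a => 2 * a + 1) := by
    intro X Y
    unfold symMS
    have h1 : (X.val.map (fun a => 2 * a + 1)).filter (fun n => n % 2 = 1)
        = X.val.map (fun a => 2 * a + 1) := by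
      apply Multiset.filter_eq_self.2
      intro a ha
      simp only [Multiset.mem_map] at ha
      obtain ⟨b, _, rfl⟩ := ha
      show (2 * b + 1) % 2 = 1
      omega
    have h2 : (Y.val.map (fun b => 2 * b)).filter (fun n => n % 2 = 1) = 0 := by
      apply Multiset.filter_eq_nil.2
      intro a ha
      simp only [Multiset.mem_map] at ha
      obtain ⟨b, _, rfl⟩ := ha
      show ¬ (2 * b) % 2 = 1
      omega
    rw [Multiset.filter_add, h1, h2, add_zero]
  have heven : ∀ (X Y : Finset ℕ),
      (symMS X Y).filter (fun n => n % 2 = 0) = Y.val.map (fun b => 2 * b) := by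
    intro X Y
    unfold symMS
    have h1 : (X.val.map (fun a => 2 * a + 1)).filter (fun n => n % 2 = 0) = 0 := by
      apply Multiset.filter_eq_nil.2
      intro a ha
      simp only [Multiset.mem_map] at ha
      obtain ⟨b, _, rfl⟩ := ha
      show ¬ (2 * b + 1) % 2 = 0
      omega
    have h2 : (Y.val.map (fun b => 2 * b)).filter (fun n => n % 2 = 0)
        = Y.val.map (fun b => 2 * b) := by
      apply Multiset.filter_eq_self.2
      intro a ha
      simp only [Multiset.mem_map] at ha
      obtain ⟨b, _, rfl⟩ := ha
      show (2 * b) % 2 = 0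
      omega
    rw [Multiset.filter_add, h1, h2, zero_add]
  constructor
  · have h1 : A.val.map (fun a => 2 * a + 1) = A'.val.map (fun a => 2 * a + 1) := by
      rw [← hodd A B, ← hodd A' B', h]
    have h2 := Multiset.map_injective (f := fun a => 2 * a + 1)
      (fun a b hab => by have : 2 * a + 1 = 2 * b + 1 := hab; omega) h1
    exact Finset.val_injective h2
  · have h1 : B.val.map (fun b => 2 * b) = B'.val.map (fun b => 2 * b) := by
      rw [← heven A B, ← heven A' B', h]
    have h2 := Multiset.map_injective (f := fun b => 2 * b)
      (fun a b hab => by have : 2 * a = 2 * b := hab; omega) h1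
    exact Finset.val_injective h2

/- ######## shifts ######## -/

def shiftF (S : Finset ℕ × Finset ℕ) : Finset ℕ × Finset ℕ :=
  (insert 0 (S.1.image (· + 1)), insert 0 (S.2.image (· + 1)))

lemma eqvGen_iterate (k : ℕ) (S : Finset ℕ × Finset ℕ) :
    Relation.EqvGen ShiftB S (shiftF^[k] S) := by
  induction k with
  | zero => exact Relation.EqvGen.refl S
  | succ n ih =>
    rw [Function.iterate_succ_apply']
    exact Relation.EqvGen.trans _ _ _ ih (Relation.EqvGen.rel _ _ ⟨rfl, rfl⟩)

lemma insert_val' (X : Finset ℕ) :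
    (insert 0 (X.image (· + 1))).val = 0 ::ₘ X.val.map (· + 1) := by
  rw [Finset.insert_val_of_notMem (by simp), Finset.image_val,
    Multiset.dedup_eq_self.2 (X.nodup.map (fun a b hab => by omega))]

lemma card_shiftF_fst (S : Finset ℕ × Finset ℕ) :
    (shiftF S).1.card = S.1.card + 1 := by
  unfold shiftF
  simp only [Finset.card]
  rw [insert_val']
  simp

lemma card_shiftF_snd (S : Finset ℕ × Finset ℕ) :
    (shiftF S).2.card = S.2.card + 1 := by
  unfold shiftF
  simp only [Finset.card]
  rw [insert_val']
  simp

lemma symMS_shiftF (S : Finset ℕ × Finset ℕ) :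
    symMS (shiftF S).1 (shiftF S).2 = 0 ::ₘ 1 ::ₘ (symMS S.1 S.2).map (· + 2) := by
  unfold symMS shiftF
  simp only [insert_val', Multiset.map_cons, Multiset.map_map, Multiset.map_add]
  have e1 : ((fun a => 2 * a + 1) ∘ (· + 1) : ℕ → ℕ) = ((· + 2) ∘ fun a => 2 * a + 1) := by
    funext a; simp only [Function.comp_apply]; omega
  have e2 : ((fun b => 2 * b) ∘ (· + 1) : ℕ → ℕ) = ((· + 2) ∘ fun b => 2 * b) := by
    funext a; simp only [Function.comp_apply]; omega
  rw [e1, e2]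
  show (1 ::ₘ _) + (0 ::ₘ _) = _
  rw [Multiset.cons_add, Multiset.add_cons]
  rw [Multiset.cons_swap]

lemma range_add_two (n : ℕ) :
    List.range (n + 2) = 0 :: 1 :: (List.range n).map (· + 2) := by
  rw [List.range_succ_eq_map, List.range_succ_eq_map, List.map_cons, List.map_map]
  have : (Nat.succ ∘ Nat.succ : ℕ → ℕ) = (· + 2) := by
    funext a; rfl
  rw [this]

lemma sort_shift (S : Multiset ℕ) :
    (0 ::ₘ 1 ::ₘ S.map (· + 2)).sort (· ≤ ·)
      = 0 :: 1 :: (S.sort (· ≤ ·)).map (· + 2) := by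
  refine (fun hp h1 h2 => List.Perm.eq_of_pairwise' (r := (· ≤ ·)) h1 h2 hp) ?_ ?_ ?_
  · rw [← Multiset.coe_eq_coe]
    rw [Multiset.sort_eq]
    rw [← Multiset.cons_coe, ← Multiset.cons_coe, ← Multiset.map_coe, Multiset.sort_eq]
  · exact Multiset.pairwise_sort _ _
  · have hs : ((S.sort (· ≤ ·)).map (· + 2)).Pairwise (· ≤ ·) := by
      have := List.Pairwise.map (R := (· ≤ ·)) (S := (· ≤ ·)) (l := S.sort (· ≤ ·))
        (· + 2) (fun a b hab => show a + 2 ≤ b + 2 by omega) (Multiset.pairwise_sort S (· ≤ ·))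
      exact this
    refine List.pairwise_cons.2 ⟨?_, List.pairwise_cons.2 ⟨?_, hs⟩⟩
    · intro b _; omega
    · intro b hb
      simp only [List.mem_map] at hb
      obtain ⟨a, _, ha⟩ := hb
      omega

lemma parL_shiftF (S : Finset ℕ × Finset ℕ) :
    parL (shiftF S).1 (shiftF S).2 = 0 :: 0 :: parL S.1 S.2 := by
  unfold parL
  rw [symMS_shiftF, sort_shift]
  simp only [List.length_cons, List.length_map]
  set L := (symMS S.1 S.2).sort (· ≤ ·) with hL
  rw [show L.length + 1 + 1 = L.length + 2 from rfl, range_add_two]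
  rw [List.zipWith_cons_cons, List.zipWith_cons_cons]
  rw [List.zipWith_map]
  have hfun : (fun a b : ℕ => a + 2 - (b + 2)) = (fun a b : ℕ => a - b) := by
    funext a b; omega
  rw [hfun]

lemma parB_filter_shiftF (S : Finset ℕ × Finset ℕ) :
    (parB (shiftF S).1 (shiftF S).2).filter (· ≠ 0)
      = (parB S.1 S.2).filter (· ≠ 0) := by
  rw [parB_eq_parL, parB_eq_parL, parL_shiftF]
  rw [← Multiset.cons_coe, ← Multiset.cons_coe]
  rw [Multiset.filter_cons_of_neg _ (by simp), Multiset.filter_cons_of_neg _ (by simp)]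

lemma iterate_facts (k : ℕ) (S : Finset ℕ × Finset ℕ) :
    (shiftF^[k] S).1.card = S.1.card + k ∧ (shiftF^[k] S).2.card = S.2.card + k ∧
    (parB (shiftF^[k] S).1 (shiftF^[k] S).2).filter (· ≠ 0)
      = (parB S.1 S.2).filter (· ≠ 0) := by
  induction k with
  | zero => simp
  | succ n ih =>
    rw [Function.iterate_succ_apply']
    refine ⟨?_, ?_, ?_⟩
    · rw [card_shiftF_fst, ih.1]; omega
    · rw [card_shiftF_snd, ih.2.1]; omega
    · rw [parB_filter_shiftF]; exact ih.2.2

/-- If two symbols of type `B_d` have the same partition `par` of `2d+1`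
(after removing zero parts), then they are equivalent under the shift relation;
i.e. `[Λ] ↦ par[Λ]` is injective on equivalence classes. -/
theorem stmt3 (d : ℕ) (hd : 1 ≤ d) (A B A' B' : Finset ℕ)
    (h : IsSymbolB d A B) (h' : IsSymbolB d A' B')
    (hpar : (parB A B).filter (· ≠ 0) = (parB A' B').filter (· ≠ 0)) :
    Relation.EqvGen ShiftB (A, B) (A', B') := by
  obtain ⟨hc, -⟩ := h
  obtain ⟨hc', -⟩ := h'
  obtain ⟨f1, f2, f3⟩ := iterate_facts B'.card (A, B)
  obtain ⟨g1, g2, g3⟩ := iterate_facts B.card (A', B')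
  set S := shiftF^[B'.card] (A, B) with hS
  set S' := shiftF^[B.card] (A', B') with hS'
  simp only [Prod.fst, Prod.snd] at f1 f2 f3 g1 g2 g3
  -- the two shifted symbols are literally equal
  have hcard : S.1.card + S.2.card = S'.1.card + S'.2.card := by
    rw [f1, f2, g1, g2]; omega
  have hfil : (parB S.1 S.2).filter (· ≠ 0) = (parB S'.1 S'.2).filter (· ≠ 0) := by
    rw [f3, g3]; exact hpar
  -- convert to list form
  have hplen : (parL S.1 S.2).length = (parL S'.1 S'.2).length := by
    rw [parL_length, parL_length, Multiset.length_sort, Multiset.length_sort,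
      symMS_card, symMS_card, hcard]
  have hlfil : (parL S.1 S.2).filter (· ≠ 0) = (parL S'.1 S'.2).filter (· ≠ 0) := by
    refine (fun hp h1 h2 => List.Perm.eq_of_pairwise' (r := (· ≤ ·)) h1 h2 hp) ?_ ?_ ?_
    · rw [← Multiset.coe_eq_coe]
      have := hfil
      rw [parB_eq_parL, parB_eq_parL] at this
      simpa [Multiset.filter_coe] using this
    · exact List.Pairwise.sublist (List.filter_sublist (l := _)) (parL_sorted S.1 S.2)
    · exact List.Pairwise.sublist (List.filter_sublist (l := _)) (parL_sorted S'.1 S'.2)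
  have hpl : parL S.1 S.2 = parL S'.1 S'.2 :=
    sorted_filter_inj _ _ (parL_sorted _ _) (parL_sorted _ _) hplen hlfil
  have hsym : symMS S.1 S.2 = symMS S'.1 S'.2 := parL_inj _ _ _ _ hcard hpl
  obtain ⟨e1, e2⟩ := symMS_inj _ _ _ _ hsym
  have hSeq : S = S' := Prod.ext e1 e2
  have t1 := eqvGen_iterate B'.card (A, B)
  have t2 := eqvGen_iterate B.card (A', B')
  rw [← hS] at t1
  rw [← hS'] at t2
  rw [hSeq] at t1
  exact Relation.EqvGen.trans _ _ _ t1 (Relation.EqvGen.symm _ _ t2)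
end

section
/- Equip [−r,r]² = [−r,r] × [−r,r] (with [−r,r] ⊂ ℤ) with the partial order (i,j) ≤ (i',j') iff i ≥ i' and j ≤ j'. For a matrix A = (a_{ij}) with nonnegative integer entries indexed by [−r,r]² and a subset F ⊆ [−r,r]², let s_F(A) = Σ_{(i,j)∈F} a_{ij}, and let s_k(A) be the maximum of s_F(A) over all subsets F that are disjoint unions of at most k chains in this poset. Then the sequence σ(A) = (s₁(A), s₂(A) − s₁(A), s₃(A) − s₂(A), …) is weakly decreasing, i.e., s_{k+1}(A) − s_k(A) ≤ s_k(A) − s_{k−1}(A) for all k ≥ 1 (with s₀(A) = 0). -/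
/-- The index box `[−r,r] × [−r,r] ⊂ ℤ × ℤ`. -/
noncomputable def box (r : ℕ) : Finset (ℤ × ℤ) := Finset.Icc (-(r : ℤ)) r ×ˢ Finset.Icc (-(r : ℤ)) r

/-- The partial order `(i,j) ≤ (i',j') ↔ i ≥ i' ∧ j ≤ j'` on `ℤ × ℤ`. -/
def ordP (p q : ℤ × ℤ) : Prop := q.1 ≤ p.1 ∧ p.2 ≤ q.2

/-- `F` is a chain for the order `ordP`: any two elements are comparable. -/
def IsChainF (F : Finset (ℤ × ℤ)) : Prop :=
  (↑F : Set (ℤ × ℤ)).Pairwise (fun p q => ordP p q ∨ ordP q p)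

/-- `F ⊆ [−r,r]²` is a disjoint union of `k` chains. -/
def IsChainFam (r k : ℕ) (F : Finset (ℤ × ℤ)) : Prop :=
  F ⊆ box r ∧ ∃ C : Fin k → Finset (ℤ × ℤ),
    (∀ a, IsChainF (C a)) ∧ (∀ a b, a ≠ b → Disjoint (C a) (C b)) ∧
    F = Finset.univ.biUnion C

/-! ### Auxiliary development -/

/-- Strict increase in both coordinates: the "incomparability" relation for `ordP`. -/
def incP (p q : ℤ × ℤ) : Prop := p.1 < q.1 ∧ p.2 < q.2

instance (p q : ℤ × ℤ) : Decidable (incP p q) := inferInstanceAs (Decidable (_ ∧ _))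

lemma incP_trans {p q t : ℤ × ℤ} (h1 : incP p q) (h2 : incP q t) : incP p t := by
  obtain ⟨a, b⟩ := h1; obtain ⟨c, d⟩ := h2; exact ⟨a.trans c, b.trans d⟩

lemma incP_irrefl (p : ℤ × ℤ) : ¬ incP p p := by
  rintro ⟨a, -⟩; exact lt_irrefl _ a

lemma not_ordP_of_incP {p q : ℤ × ℤ} (h : incP p q) : ¬ ordP p q ∧ ¬ ordP q p := by
  obtain ⟨a, b⟩ := h
  constructor
  · rintro ⟨c, -⟩; omega
  · rintro ⟨-, d⟩; omega

lemma ordP_comp_of_not_incP {p q : ℤ × ℤ} (h1 : ¬ incP p q) (h2 : ¬ incP q p) :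
    ordP p q ∨ ordP q p := by
  unfold incP at h1 h2
  unfold ordP
  omega

/-- multiplicity of a point in the pair `(F, G)`. -/
def cc (F G : Finset (ℤ × ℤ)) (p : ℤ × ℤ) : ℕ :=
  (if p ∈ F then 1 else 0) + (if p ∈ G then 1 else 0)

lemma cc_le_two (F G : Finset (ℤ × ℤ)) (p : ℤ × ℤ) : cc F G p ≤ 2 := by
  unfold cc; split <;> split <;> omega

lemma cc_pos {F G : Finset (ℤ × ℤ)} {p : ℤ × ℤ} (hp : p ∈ F ∪ G) : 1 ≤ cc F G p := by
  rcases Finset.mem_union.mp hp with h | h <;> unfold cc <;> simp [h]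

/-- All increasing sequences (as finsets) inside `F ∪ G` ending at `p`. -/
def incFams (F G : Finset (ℤ × ℤ)) (p : ℤ × ℤ) : Finset (Finset (ℤ × ℤ)) :=
  (F ∪ G).powerset.filter
    (fun T => p ∈ T ∧ (∀ q ∈ T, ∀ q' ∈ T, q = q' ∨ incP q q' ∨ incP q' q) ∧
      (∀ q ∈ T, q = p ∨ incP q p))

/-- weighted length of the longest increasing sequence in `F ∪ G` ending at `p`. -/
def ell (F G : Finset (ℤ × ℤ)) (p : ℤ × ℤ) : ℕ :=
  (incFams F G p).sup (fun T => ∑ q ∈ T, cc F G q)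

lemma singleton_mem_incFams {F G : Finset (ℤ × ℤ)} {p : ℤ × ℤ} (hp : p ∈ F ∪ G) :
    {p} ∈ incFams F G p := by
  unfold incFams
  refine Finset.mem_filter.mpr ⟨Finset.mem_powerset.mpr (by simpa using hp), ?_, ?_, ?_⟩
  · exact Finset.mem_singleton_self p
  · intro q hq q' hq'
    simp only [Finset.mem_singleton] at hq hq'
    subst hq; subst hq'; exact Or.inl rfl
  · intro q hq
    simp only [Finset.mem_singleton] at hq
    exact Or.inl hq

lemma cc_le_ell {F G : Finset (ℤ × ℤ)} {p : ℤ × ℤ} (hp : p ∈ F ∪ G) :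
    cc F G p ≤ ell F G p := by
  have := Finset.le_sup (f := fun T => ∑ q ∈ T, cc F G q) (singleton_mem_incFams hp)
  simpa [ell] using this

lemma ell_add_le {F G : Finset (ℤ × ℤ)} {p q : ℤ × ℤ} (hp : p ∈ F ∪ G) (hq : q ∈ F ∪ G)
    (hpq : incP p q) : ell F G p + cc F G q ≤ ell F G q := by
  obtain ⟨T, hT, hTeq⟩ := Finset.exists_mem_eq_sup (incFams F G p)
    ⟨{p}, singleton_mem_incFams hp⟩ (fun T => ∑ x ∈ T, cc F G x)
  rw [show ell F G p = ∑ x ∈ T, cc F G x from hTeq]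
  obtain ⟨hTsub, hpT, hTpair, hTtop⟩ := Finset.mem_filter.mp hT
  rw [Finset.mem_powerset] at hTsub
  have hqT : q ∉ T := by
    intro hqT
    rcases hTtop q hqT with rfl | hqp
    · exact incP_irrefl _ hpq
    · exact incP_irrefl _ (incP_trans hqp hpq)
  have hins : insert q T ∈ incFams F G q := by
    unfold incFams
    refine Finset.mem_filter.mpr ⟨Finset.mem_powerset.mpr ?_, Finset.mem_insert_self _ _, ?_, ?_⟩
    · exact Finset.insert_subset hq hTsub
    · intro x hx y hy
      have key : ∀ z, z ∈ T → incP z q := by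
        intro z hz
        rcases hTtop z hz with h | h
        · rw [h]; exact hpq
        · exact incP_trans h hpq
      rcases Finset.mem_insert.mp hx with hx1 | hx2
      · rcases Finset.mem_insert.mp hy with hy1 | hy2
        · exact Or.inl (hx1.trans hy1.symm)
        · rw [hx1]; exact Or.inr (Or.inr (key y hy2))
      · rcases Finset.mem_insert.mp hy with hy1 | hy2
        · rw [hy1]; exact Or.inr (Or.inl (key x hx2))
        · exact hTpair x hx2 y hy2
    · intro x hx
      rcases Finset.mem_insert.mp hx with hx1 | hx2
      · exact Or.inl hx1
      · refine Or.inr ?_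
        rcases hTtop x hx2 with h | h
        · rw [h]; exact hpq
        · exact incP_trans h hpq
  have h2 : ∑ x ∈ insert q T, cc F G x ≤ ell F G q :=
    Finset.le_sup (f := fun T => ∑ x ∈ T, cc F G x) hins
  rw [Finset.sum_insert hqT] at h2
  omega

lemma sum_cc_eq (F G : Finset (ℤ × ℤ)) (T : Finset (ℤ × ℤ)) :
    ∑ q ∈ T, cc F G q = (T ∩ F).card + (T ∩ G).card := by
  unfold cc
  rw [Finset.sum_add_distrib, ← Finset.filter_mem_eq_inter, ← Finset.filter_mem_eq_inter,
    Finset.card_filter, Finset.card_filter]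

lemma inter_card_le_of_fam {r m : ℕ} {S : Finset (ℤ × ℤ)} (hS : IsChainFam r m S)
    {T : Finset (ℤ × ℤ)} (hT : ∀ q ∈ T, ∀ q' ∈ T, q = q' ∨ incP q q' ∨ incP q' q) :
    (T ∩ S).card ≤ m := by
  obtain ⟨-, C, hchain, -, hUnion⟩ := hS
  have hsub : T ∩ S ⊆ Finset.univ.biUnion (fun a => T ∩ C a) := by
    intro x hx
    obtain ⟨hxT, hxS⟩ := Finset.mem_inter.mp hx
    rw [hUnion, Finset.mem_biUnion] at hxS
    obtain ⟨a, -, hxa⟩ := hxS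
    exact Finset.mem_biUnion.mpr ⟨a, Finset.mem_univ a, Finset.mem_inter.mpr ⟨hxT, hxa⟩⟩
  calc (T ∩ S).card ≤ (Finset.univ.biUnion (fun a => T ∩ C a)).card := Finset.card_le_card hsub
    _ ≤ ∑ a : Fin m, (T ∩ C a).card := Finset.card_biUnion_le
    _ ≤ ∑ _a : Fin m, 1 := by
        refine Finset.sum_le_sum fun a _ => ?_
        refine Finset.card_le_one.mpr fun x hx y hy => ?_
        obtain ⟨hxT, hxC⟩ := Finset.mem_inter.mp hx
        obtain ⟨hyT, hyC⟩ := Finset.mem_inter.mp hy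
        by_contra hne
        rcases hT x hxT y hyT with rfl | hxy | hyx
        · exact hne rfl
        · rcases hchain a (by exact_mod_cast hxC) (by exact_mod_cast hyC) hne with h | h
          · exact (not_ordP_of_incP hxy).1 h
          · exact (not_ordP_of_incP hxy).2 h
        · rcases hchain a (by exact_mod_cast hxC) (by exact_mod_cast hyC) hne with h | h
          · exact (not_ordP_of_incP hyx).2 h
          · exact (not_ordP_of_incP hyx).1 h
    _ = m := by simp

lemma ell_le {r m1 m2 : ℕ} {F G : Finset (ℤ × ℤ)} (hF : IsChainFam r m1 F)
    (hG : IsChainFam r m2 G) (p : ℤ × ℤ) : ell F G p ≤ m1 + m2 := by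
  refine Finset.sup_le fun T hT => ?_
  obtain ⟨-, -, hTpair, -⟩ := Finset.mem_filter.mp hT
  rw [sum_cc_eq]
  exact add_le_add (inter_card_le_of_fam hF hTpair) (inter_card_le_of_fam hG hTpair)

/-- the `j`-th level set. -/
def lev (F G : Finset (ℤ × ℤ)) (j : ℕ) : Finset (ℤ × ℤ) :=
  (F ∪ G).filter (fun p => ell F G p < j + cc F G p ∧ j ≤ ell F G p)

lemma lev_chain (F G : Finset (ℤ × ℤ)) (j : ℕ) : IsChainF (lev F G j) := by
  intro p hp q hq hne
  rw [Finset.mem_coe] at hp hq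
  obtain ⟨hpU, hp1, hp2⟩ := Finset.mem_filter.mp hp
  obtain ⟨hqU, hq1, hq2⟩ := Finset.mem_filter.mp hq
  by_cases h1 : incP p q
  · exact absurd (ell_add_le hpU hqU h1) (by omega)
  by_cases h2 : incP q p
  · exact absurd (ell_add_le hqU hpU h2) (by omega)
  exact ordP_comp_of_not_incP h1 h2

lemma lev_disjoint (F G : Finset (ℤ × ℤ)) {j j' : ℕ} (h : j + 2 ≤ j') :
    Disjoint (lev F G j) (lev F G j') := by
  refine Finset.disjoint_left.mpr fun p hp hp' => ?_
  obtain ⟨hpU, hp1, hp2⟩ := Finset.mem_filter.mp hp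
  obtain ⟨-, hq1, hq2⟩ := Finset.mem_filter.mp hp'
  have := cc_le_two F G p
  omega

/-- the odd-level half. -/
def side1 (F G : Finset (ℤ × ℤ)) : Finset (ℤ × ℤ) :=
  (F ∪ G).filter (fun p => cc F G p = 2 ∨ Odd (ell F G p))

/-- the even-level half. -/
def side2 (F G : Finset (ℤ × ℤ)) : Finset (ℤ × ℤ) :=
  (F ∪ G).filter (fun p => cc F G p = 2 ∨ Even (ell F G p))

lemma side1_eq (F G : Finset (ℤ × ℤ)) (k : ℕ) (hb : ∀ p ∈ F ∪ G, ell F G p ≤ 2 * k) :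
    side1 F G = Finset.univ.biUnion (fun i : Fin k => lev F G (2 * (i : ℕ) + 1)) := by
  ext p
  simp only [side1, Finset.mem_filter, Finset.mem_biUnion, Finset.mem_univ, true_and, lev]
  constructor
  · rintro ⟨hU, hcase⟩
    have h1 : 1 ≤ cc F G p := cc_pos hU
    have h2 : cc F G p ≤ 2 := cc_le_two F G p
    have hce : cc F G p ≤ ell F G p := cc_le_ell hU
    have hek : ell F G p ≤ 2 * k := hb p hU
    rcases Nat.even_or_odd (ell F G p) with ⟨t, ht⟩ | ⟨t, ht⟩
    · have hcc : cc F G p = 2 := by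
        rcases hcase with h | h
        · exact h
        · exfalso; obtain ⟨u, hu⟩ := h; omega
      have ht1 : 1 ≤ t := by omega
      exact ⟨⟨t - 1, by omega⟩, hU, by first | (simp only [Fin.val_mk]; omega) | omega⟩
    · exact ⟨⟨t, by omega⟩, hU, by first | (simp only [Fin.val_mk]; omega) | omega⟩
  · rintro ⟨i, hU, hlev⟩
    refine ⟨hU, ?_⟩
    have h1 : 1 ≤ cc F G p := cc_pos hU
    have h2 : cc F G p ≤ 2 := cc_le_two F G p
    rcases (by omega : cc F G p = 2 ∨ cc F G p = 1) with h | h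
    · exact Or.inl h
    · exact Or.inr ⟨(i : ℕ), by omega⟩

lemma side2_eq (F G : Finset (ℤ × ℤ)) (k : ℕ) (hb : ∀ p ∈ F ∪ G, ell F G p ≤ 2 * k) :
    side2 F G = Finset.univ.biUnion (fun i : Fin k => lev F G (2 * (i : ℕ) + 2)) := by
  ext p
  simp only [side2, Finset.mem_filter, Finset.mem_biUnion, Finset.mem_univ, true_and, lev]
  constructor
  · rintro ⟨hU, hcase⟩
    have h1 : 1 ≤ cc F G p := cc_pos hU
    have h2 : cc F G p ≤ 2 := cc_le_two F G p
    have hce : cc F G p ≤ ell F G p := cc_le_ell hU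
    have hek : ell F G p ≤ 2 * k := hb p hU
    rcases Nat.even_or_odd (ell F G p) with ⟨t, ht⟩ | ⟨t, ht⟩
    · have ht1 : 1 ≤ t := by omega
      exact ⟨⟨t - 1, by omega⟩, hU, by first | (simp only [Fin.val_mk]; omega) | omega⟩
    · have hcc : cc F G p = 2 := by
        rcases hcase with h | h
        · exact h
        · exfalso; obtain ⟨u, hu⟩ := h; omega
      have ht1 : 1 ≤ t := by omega
      exact ⟨⟨t - 1, by omega⟩, hU, by first | (simp only [Fin.val_mk]; omega) | omega⟩
  · rintro ⟨i, hU, hlev⟩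
    refine ⟨hU, ?_⟩
    have h1 : 1 ≤ cc F G p := cc_pos hU
    have h2 : cc F G p ≤ 2 := cc_le_two F G p
    rcases (by omega : cc F G p = 2 ∨ cc F G p = 1) with h | h
    · exact Or.inl h
    · exact Or.inr ⟨(i : ℕ) + 1, by omega⟩

lemma side1_fam {r m1 m2 k : ℕ} {F G : Finset (ℤ × ℤ)} (hF : IsChainFam r m1 F)
    (hG : IsChainFam r m2 G) (hk : m1 + m2 ≤ 2 * k) : IsChainFam r k (side1 F G) := by
  have hb : ∀ p ∈ F ∪ G, ell F G p ≤ 2 * k := fun p _ => (ell_le hF hG p).trans hk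
  refine ⟨?_, fun i : Fin k => lev F G (2 * (i : ℕ) + 1), fun i => lev_chain F G _, ?_, ?_⟩
  · intro p hp
    have : p ∈ F ∪ G := Finset.mem_of_mem_filter p hp
    rcases Finset.mem_union.mp this with h | h
    · exact hF.1 h
    · exact hG.1 h
  · intro a b hab
    have hne : (a : ℕ) ≠ (b : ℕ) := fun h => hab (Fin.ext h)
    rcases Nat.lt_or_ge (a : ℕ) (b : ℕ) with h | h
    · exact lev_disjoint F G (by omega)
    · exact (lev_disjoint F G (by omega)).symm
  · exact side1_eq F G k hb

lemma side2_fam {r m1 m2 k : ℕ} {F G : Finset (ℤ × ℤ)} (hF : IsChainFam r m1 F)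
    (hG : IsChainFam r m2 G) (hk : m1 + m2 ≤ 2 * k) : IsChainFam r k (side2 F G) := by
  have hb : ∀ p ∈ F ∪ G, ell F G p ≤ 2 * k := fun p _ => (ell_le hF hG p).trans hk
  refine ⟨?_, fun i : Fin k => lev F G (2 * (i : ℕ) + 2), fun i => lev_chain F G _, ?_, ?_⟩
  · intro p hp
    have : p ∈ F ∪ G := Finset.mem_of_mem_filter p hp
    rcases Finset.mem_union.mp this with h | h
    · exact hF.1 h
    · exact hG.1 h
  · intro a b hab
    have hne : (a : ℕ) ≠ (b : ℕ) := fun h => hab (Fin.ext h)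
    rcases Nat.lt_or_ge (a : ℕ) (b : ℕ) with h | h
    · exact lev_disjoint F G (by omega)
    · exact (lev_disjoint F G (by omega)).symm
  · exact side2_eq F G k hb

lemma sum_sides (F G : Finset (ℤ × ℤ)) (A : ℤ × ℤ → ℕ) :
    (∑ p ∈ side1 F G, A p) + (∑ p ∈ side2 F G, A p)
      = (∑ p ∈ F, A p) + (∑ p ∈ G, A p) := by
  have hF : ∑ p ∈ F, A p = ∑ p ∈ F ∪ G, (if p ∈ F then A p else 0) := by
    rw [← Finset.sum_filter, Finset.filter_mem_eq_inter, Finset.union_inter_cancel_left]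
  have hG : ∑ p ∈ G, A p = ∑ p ∈ F ∪ G, (if p ∈ G then A p else 0) := by
    rw [← Finset.sum_filter, Finset.filter_mem_eq_inter, Finset.union_inter_cancel_right]
  rw [hF, hG, side1, side2, Finset.sum_filter, Finset.sum_filter,
    ← Finset.sum_add_distrib, ← Finset.sum_add_distrib]
  refine Finset.sum_congr rfl fun p hp => ?_
  rcases Nat.even_or_odd (ell F G p) with he | ho
  · have hno : ¬ Odd (ell F G p) := by simpa [Nat.not_odd_iff_even] using he
    by_cases hpF : p ∈ F <;> by_cases hpG : p ∈ G <;>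
      simp_all [cc] <;> omega
  · have hne : ¬ Even (ell F G p) := by simpa [Nat.not_even_iff_odd] using ho
    by_cases hpF : p ∈ F <;> by_cases hpG : p ∈ G <;>
      simp_all [cc] <;> omega

/-- concavity in Greene's theorem: if `s k` is the maximal sum
`Σ_{(i,j)∈F} a_{ij}` over `k`-chain families `F` in `[−r,r]²` (with `s 0 = 0`), then
`s (k+1) − s k ≤ s k − s (k−1)` for all `k ≥ 1`; i.e. the successive differences form a
weakly decreasing sequence. -/
theorem stmt9 (r : ℕ) (A : ℤ × ℤ → ℕ) (s : ℕ → ℕ)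
    (hs : ∀ k : ℕ,
      IsGreatest {t : ℕ | ∃ F : Finset (ℤ × ℤ), IsChainFam r k F ∧ t = ∑ p ∈ F, A p} (s k)) :
    ∀ k : ℕ, 1 ≤ k → s (k + 1) + s (k - 1) ≤ s k + s k := by
  intro k hk
  obtain ⟨F, hF, hFs⟩ := (hs (k + 1)).1
  obtain ⟨G, hG, hGs⟩ := (hs (k - 1)).1
  have hkk : (k + 1) + (k - 1) ≤ 2 * k := by omega
  have h1 : IsChainFam r k (side1 F G) := side1_fam hF hG hkk
  have h2 : IsChainFam r k (side2 F G) := side2_fam hF hG hkk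
  have hle1 : (∑ p ∈ side1 F G, A p) ≤ s k := (hs k).2 ⟨side1 F G, h1, rfl⟩
  have hle2 : (∑ p ∈ side2 F G, A p) ≤ s k := (hs k).2 ⟨side2 F G, h2, rfl⟩
  have hsum := sum_sides F G A
  rw [hFs, hGs]
  omega
end
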